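/- Let f~_G and f~_{K_n} denote the restrictions to V_e^{(I_1)} of the edge functions of G and of the complete graph K_n on V(G), and let p in V_e^{(I_1)} be a regular point of both G and K_n in V_e^{(I_1)}. Then rank d f~_G(p) ≤ rank d f~_{K_n}(p), and equality holds if and only if there exists a neighborhood N_p of p in V_e^{(I_1)} with f~_{K_n}^{-1}(f~_{K_n}(p)) ∩ N_p = f~_G^{-1}(f~_G(p)) ∩ N_p. -/

import Mathlib

/-- The external representation matrix `H_e(x)`. -/
def externalRep (n d : ℕ) {S : Type*} [Group S] (M : S → Matrix (Fin d) (Fin d) ℝ)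
    (π : S → Equiv.Perm (Fin n)) (x : S) :
    Matrix (Fin n × Fin d) (Fin n × Fin d) ℝ :=
  Matrix.of fun ka lb => if lb.1 = (π x)⁻¹ ka.1 then M x ka.2 lb.2 else 0

/-- The fixed subspace `V_e^{(I_1)}` of the external representation. -/
def fixedSubspace (n d : ℕ) {S : Type*} [Group S] (M : S → Matrix (Fin d) (Fin d) ℝ)
    (π : S → Equiv.Perm (Fin n)) : Submodule ℝ (Fin n × Fin d → ℝ) :=
  ⨅ x : S, LinearMap.ker ((externalRep n d M π x).mulVecLin - LinearMap.id)

/-- The edge set of the complete graph on `Fin n`. -/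
def completeEdges (n : ℕ) : Finset (Fin n × Fin n) :=
  Finset.univ.filter fun e => e.1 ≠ e.2

/-- The restriction `f~_G` of the edge function of `G` to a subspace. -/
def resEdgeFunction (n d : ℕ) (E : Finset (Fin n × Fin n))
    (V₁ : Submodule ℝ (Fin n × Fin d → ℝ)) : V₁ → (E → ℝ) :=
  fun q e => ∑ a : Fin d, ((q : Fin n × Fin d → ℝ) (e.1.1, a) -
    (q : Fin n × Fin d → ℝ) (e.1.2, a)) ^ 2

/-- The rank of the differential of `f` at `q`. -/
noncomputable def dRank {X Y : Type*} [NormedAddCommGroup X] [NormedSpace ℝ X]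
    [NormedAddCommGroup Y] [NormedSpace ℝ Y] (f : X → Y) (q : X) : ℕ :=
  Module.finrank ℝ (LinearMap.range ((fderiv ℝ f q) : X →ₗ[ℝ] Y))

/-!
Since `E(G) ⊆ E(K_n)`, `f~_G = L ∘ f~_{K_n}` for the linear restriction `L` to the coordinates
in `E(G)`; hence `d f~_G = L ∘ d f~_{K_n}`, which gives the rank inequality and
`ker d f~_{K_n} ⊆ ker d f~_G`. At a regular point `p` of `f`, composing `f` with a projection onto
the range of `df(p)` yields a submersion with the same kernels near `p`. By the implicit function
theorem its level set through `p` is then swept out by curves with every velocity in `ker df(p)`,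
and any function whose differential vanishes on `ker df` is constant on it near `p`.
If the ranks agree, the kernels of both differentials agree near `p`, so `f~_{K_n}` is constant on
the level set of `f~_G`. Conversely, if the level sets agree, the curves in the level set of
`f~_G` show `ker d f~_G(p) ⊆ ker d f~_{K_n}(p)`, and rank-nullity gives equality of ranks.
-/

open Filter Topology Module LinearMap

section LinearAlgebra

variable {K X Y Z : Type*} [Field K] [AddCommGroup X] [Module K X] [FiniteDimensional K X]
  [AddCommGroup Y] [Module K Y] [AddCommGroup Z] [Module K Z]

theorem LinearMap.ker_comp_eq_of_finrank_range_le (A : X →ₗ[K] Y) (P : Y →ₗ[K] Z)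
    (h : finrank K (range A) ≤ finrank K (range (P ∘ₗ A))) : ker (P ∘ₗ A) = ker A := by
  refine (Submodule.eq_of_le_of_finrank_le (ker_le_ker_comp A P) ?_).symm
  have := finrank_range_add_finrank_ker A
  have := finrank_range_add_finrank_ker (P ∘ₗ A)
  omega

theorem LinearMap.finrank_range_comp_eq_of_ker_le (A : X →ₗ[K] Y) (P : Y →ₗ[K] Z)
    (h : ker (P ∘ₗ A) ≤ ker A) : finrank K (range (P ∘ₗ A)) = finrank K (range A) := by
  have hker := le_antisymm h (ker_le_ker_comp A P)
  have := finrank_range_add_finrank_ker A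
  have := finrank_range_add_finrank_ker (P ∘ₗ A)
  rw [hker] at this
  omega

end LinearAlgebra

section Rank

variable {X Y : Type*} [NormedAddCommGroup X] [NormedSpace ℝ X]
  [NormedAddCommGroup Y] [NormedSpace ℝ Y] [FiniteDimensional ℝ Y]

-- A basis of the range at `w₀` stays linearly independent nearby.
theorem ContinuousAt.eventually_finrank_range_le {W : Type*} [TopologicalSpace W]
    {T : W → X →L[ℝ] Y} {w₀ : W} (hT : ContinuousAt T w₀) :
    ∀ᶠ w in 𝓝 w₀, finrank ℝ (range (T w₀ : X →ₗ[ℝ] Y)) ≤ finrank ℝ (range (T w : X →ₗ[ℝ] Y)) := by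
  set r := finrank ℝ (range (T w₀ : X →ₗ[ℝ] Y))
  obtain ⟨v, hv⟩ : ∃ v : Fin r → X, LinearIndependent ℝ fun i => T w₀ (v i) := by
    let b := finBasis ℝ (range (T w₀ : X →ₗ[ℝ] Y))
    choose v hv using fun i => mem_range.1 (b i).2
    refine ⟨v, ?_⟩
    rw [show (fun i => T w₀ (v i)) = Subtype.val ∘ b from funext hv]
    exact b.linearIndependent.map' _ (Submodule.ker_subtype _)
  have hcont : ContinuousAt (fun w => fun i => T w (v i)) w₀ :=
    continuousAt_pi.2 fun i => hT.clm_apply continuousAt_const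
  filter_upwards [hcont.preimage_mem_nhds (isOpen_setOfPred_linearIndependent.mem_nhds hv)]
    with w hw
  calc r = finrank ℝ (Submodule.span ℝ (Set.range fun i => T w (v i))) := by
        rw [finrank_span_eq_card hw, Fintype.card_fin]
    _ ≤ finrank ℝ (range (T w : X →ₗ[ℝ] Y)) := by
        refine Submodule.finrank_mono (Submodule.span_le.2 ?_)
        rintro _ ⟨i, rfl⟩
        exact mem_range_self _ _

theorem ContDiffAt.eventually_dRank_le {f : X → Y} {p : X} (hf : ContDiffAt ℝ 1 f p) :
    ∀ᶠ q in 𝓝 p, dRank f p ≤ dRank f q :=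
  (hf.continuousAt_fderiv one_ne_zero).eventually_finrank_range_le

theorem dRank_comp_le {Z : Type*} [NormedAddCommGroup Z] [NormedSpace ℝ Z]
    (L : Y →L[ℝ] Z) {f : X → Y} {q : X} (hf : DifferentiableAt ℝ f q) :
    dRank (L ∘ f) q ≤ dRank f q := by
  rw [dRank, dRank, (L.hasFDerivAt.comp q hf.hasFDerivAt).fderiv]
  change finrank ℝ (range ((L : Y →ₗ[ℝ] Z) ∘ₗ (fderiv ℝ f q : X →ₗ[ℝ] Y))) ≤ _
  rw [range_comp]
  exact Submodule.finrank_map_le _ _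

end Rank

section Submersion

variable {E F W : Type*} [NormedAddCommGroup E] [NormedSpace ℝ E] [CompleteSpace E]
  [NormedAddCommGroup F] [NormedSpace ℝ F] [FiniteDimensional ℝ F]
  [NormedAddCommGroup W] [NormedSpace ℝ W] {g : E → F} {g' : E →L[ℝ] F} {p : E}

theorem HasStrictFDerivAt.contDiffAt_uncurry_implicitFunction (hg : HasStrictFDerivAt g g' p)
    (hg' : g'.range = ⊤) (hc : ContDiffAt ℝ 1 g p) :
    ContDiffAt ℝ 1 (Function.uncurry (hg.implicitFunction g g' hg')) (g p, 0) := by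
  set φ := hg.implicitFunctionDataOfComplemented g g' hg'
    g'.ker_closedComplemented_of_finiteDimensional_range
  have hφ : φ.prodFun φ.pt = (g p, 0) := by simp [φ]
  have := φ.contDiffAt_implicitFunction (n := 1) hc (by simp only [φ]; fun_prop) one_ne_zero
  rwa [hφ] at this

theorem HasStrictFDerivAt.exists_curve_mem_levelSet (hg : HasStrictFDerivAt g g' p)
    (hg' : g'.range = ⊤) {v : E} (hv : v ∈ g'.ker) :
    ∃ γ : ℝ → E, γ 0 = p ∧ HasDerivAt γ v 0 ∧ ∀ᶠ t in 𝓝 0, g (γ t) = g p := by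
  set ψ := hg.implicitFunction g g' hg'
  set z : g'.ker := ⟨v, hv⟩
  refine ⟨fun t => ψ (g p) (t • z), by simp [ψ], ?_, ?_⟩
  · have hz : HasDerivAt (fun t : ℝ => t • z) z 0 := by
      simpa using (hasDerivAt_id (0 : ℝ)).smul_const z
    have hψ := (hg.to_implicitFunction hg').hasFDerivAt
    rw [← zero_smul ℝ z] at hψ
    exact hψ.comp_hasDerivAt 0 hz
  · have ht : Tendsto (fun t : ℝ => (g p, t • z)) (𝓝 0) (𝓝 (g p, 0)) :=
      tendsto_const_nhds.prodMk_nhds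
        ((continuous_id.smul continuous_const).tendsto' 0 0 (zero_smul ℝ z))
    exact ht.eventually (hg.map_implicitFunction_eq hg')

-- `h` is constant along the implicit-function parametrisation `ψ` of the level set, since the
-- differential of `ψ` takes values in `ker dg`.
theorem ContDiffAt.eventually_eq_of_ker_fderiv_le (hg : ContDiffAt ℝ 1 g p)
    (hg' : (fderiv ℝ g p).range = ⊤) {h : E → W}
    (hh : ∀ᶠ q in 𝓝 p, DifferentiableAt ℝ h q ∧ (fderiv ℝ g q).ker ≤ (fderiv ℝ h q).ker) :
    ∀ᶠ q in 𝓝 p, g q = g p → h q = h p := by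
  have hs := hg.hasStrictFDerivAt one_ne_zero
  set ψ := hs.implicitFunction g _ hg' (g p)
  have hslice : Tendsto (fun z => (g p, z)) (𝓝 (0 : (fderiv ℝ g p).ker)) (𝓝 (g p, 0)) :=
    tendsto_const_nhds.prodMk_nhds tendsto_id
  have hgood : ∀ᶠ z in 𝓝 0, DifferentiableAt ℝ ψ z ∧ g (ψ z) = g p ∧
      (DifferentiableAt ℝ h (ψ z) ∧ (fderiv ℝ g (ψ z)).ker ≤ (fderiv ℝ h (ψ z)).ker) ∧
        DifferentiableAt ℝ g (ψ z) := by
    have hψ := hslice.eventually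
      ((hs.contDiffAt_uncurry_implicitFunction hg' hg).eventually (by simp))
    have hlevel := hslice.eventually (hs.map_implicitFunction_eq hg')
    have hnear := (hs.tendsto_implicitFunction hg' tendsto_const_nhds tendsto_id).eventually
      (hh.and ((hg.eventually (by simp)).mono fun _ hq => hq.differentiableAt one_ne_zero))
    filter_upwards [hψ, hlevel, hnear] with z hψz hlevelz hnearz
    exact ⟨(hψz.differentiableAt one_ne_zero).comp z
      ((differentiableAt_const _).prodMk differentiableAt_id), hlevelz, hnearz⟩
  obtain ⟨ε, hε, hball⟩ := Metric.eventually_nhds_iff_ball.1 hgood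
  have hconst : ∀ z ∈ Metric.ball 0 ε, h (ψ z) = h p := by
    have hderiv : Set.EqOn (fderiv ℝ (h ∘ ψ)) 0 (Metric.ball 0 ε) := by
      intro z hz
      obtain ⟨hψz, -, ⟨hhz, hker⟩, hgz⟩ := hball z hz
      have hgψ : fderiv ℝ (g ∘ ψ) z = 0 := by
        have : g ∘ ψ =ᶠ[𝓝 z] fun _ => g p :=
          eventually_of_mem (Metric.isOpen_ball.mem_nhds hz) fun y hy => (hball y hy).2.1
        rw [this.fderiv_eq, fderiv_const_apply]
      ext w
      rw [fderiv_comp z hhz hψz]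
      refine hker ?_
      have := DFunLike.congr_fun hgψ w
      rw [fderiv_comp z hgz hψz] at this
      exact this
    intro z hz
    have := Metric.isOpen_ball.is_const_of_fderiv_eq_zero (convex_ball _ _).isPreconnected
      (fun y hy => ((hball y hy).2.2.1.1.comp y (hball y hy).1).differentiableWithinAt) hderiv
      hz (Metric.mem_ball_self hε)
    simpa [ψ] using this
  set Ψ := hs.implicitToOpenPartialHomeomorph g _ hg'
  have hsnd : Tendsto (fun q => (Ψ q).2) (𝓝 p) (𝓝 0) := by
    have := (Ψ.continuousAt (hs.mem_implicitToOpenPartialHomeomorph_source hg')).snd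
    simpa [Ψ] using this.tendsto
  filter_upwards [hs.eq_implicitFunction hg', hsnd.eventually (Metric.ball_mem_nhds _ hε)]
    with q hq hqball hgq
  rw [← hq, hgq]
  exact hconst _ hqball

end Submersion

section RegularPoint

variable {X Y Z : Type*} [NormedAddCommGroup X] [NormedSpace ℝ X] [FiniteDimensional ℝ X]
  [NormedAddCommGroup Y] [NormedSpace ℝ Y]
  [NormedAddCommGroup Z] [NormedSpace ℝ Z] {f : X → Y} {p : X}

def IsRegularPoint (f : X → Y) (p : X) : Prop :=
  ∀ᶠ q in 𝓝 p, dRank f q ≤ dRank f p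

theorem IsRegularPoint.exists_submersion (hf : ContDiff ℝ 1 f) (hp : IsRegularPoint f p) :
    ∃ P : Y →L[ℝ] (fderiv ℝ f p).range, (fderiv ℝ (P ∘ f) p).range = ⊤ ∧
      ∀ᶠ q in 𝓝 p, (fderiv ℝ (P ∘ f) q).ker = (fderiv ℝ f q).ker := by
  obtain ⟨P, hP⟩ := Submodule.ClosedComplemented.of_finiteDimensional (fderiv ℝ f p).range
  have hdP : ∀ q, fderiv ℝ (P ∘ f) q = P ∘L fderiv ℝ f q := fun q =>
    (P.hasFDerivAt.comp q (hf.differentiable one_ne_zero q).hasFDerivAt).fderiv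
  have hsurj : (fderiv ℝ (P ∘ f) p).range = ⊤ := by
    refine LinearMap.range_eq_top.2 fun y => ?_
    obtain ⟨x, hx⟩ := LinearMap.mem_range.1 y.2
    exact ⟨x, by rw [hdP]; exact (congrArg P hx).trans (hP y)⟩
  have hrank : dRank (P ∘ f) p = dRank f p := by
    rw [dRank, hsurj, finrank_top, dRank]
  refine ⟨P, hsurj, ?_⟩
  filter_upwards [hp, (P.contDiff.comp hf).contDiffAt.eventually_dRank_le] with q hfq hgq
  have hle : dRank f q ≤ dRank (P ∘ f) q := hfq.trans (hrank ▸ hgq)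
  rw [dRank, dRank, hdP] at hle
  rw [hdP]
  exact ker_comp_eq_of_finrank_range_le _ _ hle

theorem IsRegularPoint.eventually_eq_of_ker_fderiv_le (hf : ContDiff ℝ 1 f)
    (hp : IsRegularPoint f p) {h : X → Z}
    (hh : ∀ᶠ q in 𝓝 p, DifferentiableAt ℝ h q ∧ (fderiv ℝ f q).ker ≤ (fderiv ℝ h q).ker) :
    ∀ᶠ q in 𝓝 p, f q = f p → h q = h p := by
  obtain ⟨P, hsurj, hker⟩ := hp.exists_submersion hf
  have hPf := (P.contDiff.comp hf).contDiffAt.eventually_eq_of_ker_fderiv_le hsurj (h := h)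
    (by filter_upwards [hh, hker] with q hq hkq using ⟨hq.1, hkq ▸ hq.2⟩)
  filter_upwards [hPf] with q hq hfq
  exact hq (by simp [hfq])

theorem IsRegularPoint.exists_curve_mem_levelSet (hf : ContDiff ℝ 1 f) (hp : IsRegularPoint f p)
    {v : X} (hv : v ∈ (fderiv ℝ f p).ker) :
    ∃ γ : ℝ → X, γ 0 = p ∧ HasDerivAt γ v 0 ∧ ∀ᶠ t in 𝓝 0, f (γ t) = f p := by
  obtain ⟨P, hsurj, hker⟩ := hp.exists_submersion hf
  have hg : ContDiffAt ℝ 1 (P ∘ f) p := (P.contDiff.comp hf).contDiffAt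
  obtain ⟨γ, hγ0, hγ, hγg⟩ := (hg.hasStrictFDerivAt one_ne_zero).exists_curve_mem_levelSet hsurj
    (hker.self_of_nhds ▸ hv)
  have hlevel : ∀ᶠ q in 𝓝 p, (P ∘ f) q = (P ∘ f) p → f q = f p :=
    hg.eventually_eq_of_ker_fderiv_le hsurj
      (hker.mono fun q hq => ⟨hf.differentiable one_ne_zero q, hq.le⟩)
  have hγp : Tendsto γ (𝓝 0) (𝓝 p) := hγ0 ▸ hγ.continuousAt.tendsto
  refine ⟨γ, hγ0, hγ, ?_⟩
  filter_upwards [hγg, hγp.eventually hlevel] with t hgt hlevelt using hlevelt hgt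

theorem IsRegularPoint.dRank_comp_eq_iff [FiniteDimensional ℝ Z] {F : X → Y} (L : Y →L[ℝ] Z)
    (hF : ContDiff ℝ 1 F) (hFp : IsRegularPoint F p) (hGp : IsRegularPoint (L ∘ F) p) :
    dRank (L ∘ F) p = dRank F p ↔ ∀ᶠ q in 𝓝 p, (F q = F p ↔ L (F q) = L (F p)) := by
  have hG : ContDiff ℝ 1 (L ∘ F) := L.contDiff.comp hF
  have hdG : ∀ q, fderiv ℝ (L ∘ F) q = L ∘L fderiv ℝ F q := fun q =>
    (L.hasFDerivAt.comp q (hF.differentiable one_ne_zero q).hasFDerivAt).fderiv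
  constructor
  · intro hrank
    have hker : ∀ᶠ q in 𝓝 p, (fderiv ℝ (L ∘ F) q).ker = (fderiv ℝ F q).ker := by
      filter_upwards [hFp, hG.contDiffAt.eventually_dRank_le] with q hFq hGq
      have hle : dRank F q ≤ dRank (L ∘ F) q := hFq.trans (hrank ▸ hGq)
      rw [dRank, dRank, hdG] at hle
      rw [hdG]
      exact ker_comp_eq_of_finrank_range_le _ _ hle
    filter_upwards [hGp.eventually_eq_of_ker_fderiv_le hG (h := F)
      (hker.mono fun q hq => ⟨hF.differentiable one_ne_zero q, hq.le⟩)] with q hq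
    exact ⟨congrArg L, hq⟩
  · intro hlevel
    suffices (fderiv ℝ (L ∘ F) p).ker ≤ (fderiv ℝ F p).ker by
      rw [hdG] at this
      rw [dRank, dRank, hdG]
      exact finrank_range_comp_eq_of_ker_le _ _ this
    intro v hv
    obtain ⟨γ, hγ0, hγ, hγG⟩ := hGp.exists_curve_mem_levelSet hG hv
    have hγp : Tendsto γ (𝓝 0) (𝓝 p) := hγ0 ▸ hγ.continuousAt.tendsto
    have hγF : ∀ᶠ t in 𝓝 0, F (γ t) = F p := by
      filter_upwards [hγG, hγp.eventually hlevel] with t hGt hiff using hiff.2 hGt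
    have hFγ : HasDerivAt (F ∘ γ) (fderiv ℝ F p v) 0 :=
      (hF.differentiable one_ne_zero p).hasFDerivAt.comp_hasDerivAt_of_eq 0 hγ hγ0.symm
    exact hFγ.unique ((hasDerivAt_const 0 (F p)).congr_of_eventuallyEq hγF)

end RegularPoint

theorem contDiff_resEdgeFunction (n d : ℕ) (E : Finset (Fin n × Fin n))
    (V : Submodule ℝ (Fin n × Fin d → ℝ)) : ContDiff ℝ 1 (resEdgeFunction n d E V) := by
  have hV : ∀ i, ContDiff ℝ 1 fun q : V => (q : Fin n × Fin d → ℝ) i :=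
    fun i => (contDiff_apply ℝ ℝ i).comp V.subtypeL.contDiff
  exact contDiff_pi.2 fun e => ContDiff.sum fun a _ => ((hV _).sub (hV _)).pow 2

theorem resEdgeFunction_eq_comp_of_subset {n d : ℕ} {E E' : Finset (Fin n × Fin n)} (h : E ⊆ E')
    (V : Submodule ℝ (Fin n × Fin d → ℝ)) :
    resEdgeFunction n d E V = (ContinuousLinearMap.pi fun e : E =>
      ContinuousLinearMap.proj (R := ℝ) (φ := fun _ : E' => ℝ) ⟨e, h e.2⟩) ∘
        resEdgeFunction n d E' V :=
  rfl

theorem rank_le_and_eq_iff_level_sets_agree_general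
    (n d : ℕ) (EG : Finset (Fin n × Fin n)) (hEG : EG ⊆ completeEdges n)
    {S : Type*} [Group S]
    (M : S → Matrix (Fin d) (Fin d) ℝ) (π : S → Equiv.Perm (Fin n))
    (p : fixedSubspace n d M π)
    (hregG : ∃ U ∈ nhds p, ∀ q ∈ U,
      dRank (resEdgeFunction n d EG (fixedSubspace n d M π)) q ≤
        dRank (resEdgeFunction n d EG (fixedSubspace n d M π)) p)
    (hregK : ∃ U ∈ nhds p, ∀ q ∈ U,
      dRank (resEdgeFunction n d (completeEdges n) (fixedSubspace n d M π)) q ≤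
        dRank (resEdgeFunction n d (completeEdges n) (fixedSubspace n d M π)) p) :
    dRank (resEdgeFunction n d EG (fixedSubspace n d M π)) p ≤
      dRank (resEdgeFunction n d (completeEdges n) (fixedSubspace n d M π)) p ∧
    (dRank (resEdgeFunction n d EG (fixedSubspace n d M π)) p =
        dRank (resEdgeFunction n d (completeEdges n) (fixedSubspace n d M π)) p ↔
      ∃ N ∈ nhds p, ∀ q ∈ N,
        (resEdgeFunction n d (completeEdges n) (fixedSubspace n d M π) q =
            resEdgeFunction n d (completeEdges n) (fixedSubspace n d M π) p ↔
          resEdgeFunction n d EG (fixedSubspace n d M π) q =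
            resEdgeFunction n d EG (fixedSubspace n d M π) p)) := by
  have hK := contDiff_resEdgeFunction n d (completeEdges n) (fixedSubspace n d M π)
  rw [resEdgeFunction_eq_comp_of_subset hEG] at hregG ⊢
  refine ⟨dRank_comp_le _ (hK.differentiable one_ne_zero p), ?_⟩
  rw [IsRegularPoint.dRank_comp_eq_iff _ hK (eventually_iff_exists_mem.2 hregK)
    (eventually_iff_exists_mem.2 hregG), eventually_iff_exists_mem]
  rfl

/-- if `p ∈ V_e^{(I_1)}` is a regular point of both `G` and `K_n` in
`V_e^{(I_1)}`, then `rank d f~_G(p) ≤ rank d f~_{K_n}(p)`, with equality iff the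
level sets of `f~_G` and `f~_{K_n}` through `p` agree on some neighborhood of `p`. -/
theorem rank_le_and_eq_iff_level_sets_agree
    (n d : ℕ) (EG : Finset (Fin n × Fin n)) (hEG : EG ⊆ completeEdges n)
    {S : Type*} [Group S] [Fintype S]
    (M : S → Matrix (Fin d) (Fin d) ℝ) (π : S → Equiv.Perm (Fin n))
    (p : fixedSubspace n d M π)
    (hregG : ∃ U ∈ nhds p, ∀ q ∈ U,
      dRank (resEdgeFunction n d EG (fixedSubspace n d M π)) q ≤
        dRank (resEdgeFunction n d EG (fixedSubspace n d M π)) p)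
    (hregK : ∃ U ∈ nhds p, ∀ q ∈ U,
      dRank (resEdgeFunction n d (completeEdges n) (fixedSubspace n d M π)) q ≤
        dRank (resEdgeFunction n d (completeEdges n) (fixedSubspace n d M π)) p) :
    dRank (resEdgeFunction n d EG (fixedSubspace n d M π)) p ≤
      dRank (resEdgeFunction n d (completeEdges n) (fixedSubspace n d M π)) p ∧
    (dRank (resEdgeFunction n d EG (fixedSubspace n d M π)) p =
        dRank (resEdgeFunction n d (completeEdges n) (fixedSubspace n d M π)) p ↔
      ∃ N ∈ nhds p, ∀ q ∈ N,
        (resEdgeFunction n d (completeEdges n) (fixedSubspace n d M π) q =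
            resEdgeFunction n d (completeEdges n) (fixedSubspace n d M π) p ↔
          resEdgeFunction n d EG (fixedSubspace n d M π) q =
            resEdgeFunction n d EG (fixedSubspace n d M π) p)) :=
  rank_le_and_eq_iff_level_sets_agree_general n d EG hEG M π p hregG hregK
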